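/- If H is a chordal graph whose maximum clique has size at most k+1, then H has treewidth at most k. -/

import Mathlib

/-- `G` has a tree decomposition of width at most `k`: a finite tree whose nodes carry
bags of size at most `k + 1`, covering all vertices and edges, such that for each vertex
the set of bags containing it induces a connected (sub)tree. -/
def HasTreewidthLE {V : Type*} (G : SimpleGraph V) (k : ℕ) : Prop :=
  ∃ (n : ℕ) (t : SimpleGraph (Fin n)) (B : Fin n → Finset V),
    t.IsTree ∧
    (∀ v : V, ∃ i, v ∈ B i) ∧
    (∀ u v : V, G.Adj u v → ∃ i, u ∈ B i ∧ v ∈ B i) ∧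
    (∀ v : V, (t.induce {i : Fin n | v ∈ B i}).Connected) ∧
    (∀ i, (B i).card ≤ k + 1)

/-- `G` is chordal: every cycle of length at least 4 has a chord, i.e. two vertices of
the cycle joined by an edge of `G` that is not an edge of the cycle. -/
def IsChordal {V : Type*} (G : SimpleGraph V) : Prop :=
  ∀ (v : V) (w : G.Walk v v), w.IsCycle → 4 ≤ w.length →
    ∃ a b : V, a ∈ w.support ∧ b ∈ w.support ∧ G.Adj a b ∧ s(a, b) ∉ w.edges

namespace TWProof

open SimpleGraph

universe u

variable {V : Type u} {G : SimpleGraph V}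

/-! ### Walks in induced subgraphs -/

/-- Lift a walk whose support lies in `s` to the induced subgraph on `s`. -/
def toInduce {s : Set V} : ∀ {x y : V} (p : G.Walk x y) (hp : ∀ z ∈ p.support, z ∈ s),
    (G.induce s).Walk ⟨x, hp x p.start_mem_support⟩ ⟨y, hp y p.end_mem_support⟩
  | _, _, SimpleGraph.Walk.nil, _ => SimpleGraph.Walk.nil
  | _, _, SimpleGraph.Walk.cons h q, hp =>
      SimpleGraph.Walk.cons (by exact h)
        (toInduce q (fun z hz => hp z (by simp [SimpleGraph.Walk.support_cons, hz])))

lemma toInduce_map {s : Set V} : ∀ {x y : V} (p : G.Walk x y) (hp : ∀ z ∈ p.support, z ∈ s),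
    (toInduce p hp).map (SimpleGraph.Embedding.induce s).toHom = p
  | _, _, SimpleGraph.Walk.nil, _ => rfl
  | _, _, SimpleGraph.Walk.cons h q, hp => by
      simp only [toInduce, SimpleGraph.Walk.map_cons]
      congr 1
      exact congrArg (SimpleGraph.Walk.cons h) (toInduce_map (s := s) q _)

/-- Chordality passes to induced subgraphs. -/
lemma isChordal_induce (h : IsChordal G) (s : Set V) : IsChordal (G.induce s) := by
  intro v w hcyc hlen
  have hinj : Function.Injective ((SimpleGraph.Embedding.induce (G := G) s) : ↥s → V) :=
    Subtype.val_injective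
  have hc2 : (w.map (SimpleGraph.Embedding.induce (G := G) s).toHom).IsCycle :=
    (SimpleGraph.Walk.map_isCycle_iff_of_injective hinj).mpr hcyc
  obtain ⟨a, b, ha, hb, hab, hne⟩ := h _ _ hc2 (by rwa [SimpleGraph.Walk.length_map])
  rw [SimpleGraph.Walk.support_map] at ha hb
  obtain ⟨a', ha', rfl⟩ := List.mem_map.mp ha
  obtain ⟨b', hb', rfl⟩ := List.mem_map.mp hb
  refine ⟨a', b', ha', hb', hab, fun hmem => hne ?_⟩
  rw [SimpleGraph.Walk.edges_map]
  exact List.mem_map.mpr ⟨s(a', b'), hmem, by simp⟩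

/-! ### Simplicial vertices and separators -/

def IsSimplicial (G : SimpleGraph V) (v : V) : Prop :=
  ∀ a b : V, G.Adj v a → G.Adj v b → a ≠ b → G.Adj a b

def Sep (G : SimpleGraph V) (S : Finset V) (a b : V) : Prop :=
  a ∉ S ∧ b ∉ S ∧ ∀ p : G.Walk a b, ∃ x ∈ S, x ∈ p.support

def Reach (G : SimpleGraph V) (S : Finset V) (r x : V) : Prop :=
  ∃ p : G.Walk r x, ∀ z ∈ p.support, z ∉ S

lemma Sep.symm {S : Finset V} {a b : V} (h : Sep G S a b) : Sep G S b a := by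
  obtain ⟨h1, h2, h3⟩ := h
  refine ⟨h2, h1, fun p => ?_⟩
  obtain ⟨x, hx, hs⟩ := h3 p.reverse
  exact ⟨x, hx, by rwa [SimpleGraph.Walk.support_reverse, List.mem_reverse] at hs⟩

lemma reach_not_both {S : Finset V} {a b : V} (hsep : Sep G S a b) (x : V) :
    Reach G S a x → Reach G S b x → False := by
  rintro ⟨p, hp⟩ ⟨q, hq⟩
  obtain ⟨z, hzS, hz⟩ := hsep.2.2 (p.append q.reverse)
  rw [SimpleGraph.Walk.mem_support_append_iff] at hz
  rcases hz with hz | hz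
  · exact hp z hz hzS
  · rw [SimpleGraph.Walk.support_reverse, List.mem_reverse] at hz
    exact hq z hz hzS

lemma reach_self {S : Finset V} {a : V} (ha : a ∉ S) : Reach G S a a :=
  ⟨SimpleGraph.Walk.nil, by simp [ha]⟩

lemma reach_extend {S : Finset V} {a x y : V} (h : Reach G S a x) (hadj : G.Adj x y)
    (hy : y ∉ S) : Reach G S a y := by
  obtain ⟨p, hp⟩ := h
  refine ⟨p.concat hadj, ?_⟩
  intro z hz
  rw [SimpleGraph.Walk.support_concat, List.mem_append] at hz
  rcases hz with hz | hz
  · exact hp z hz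
  · simp at hz; subst hz; exact hy

lemma reach_of_mem_support [DecidableEq V] {S : Finset V} {a c z : V} (p : G.Walk a c)
    (hp : ∀ w ∈ p.support, w ∉ S) (hz : z ∈ p.support) : Reach G S a z :=
  ⟨p.takeUntil z hz, fun w hw => hp w (SimpleGraph.Walk.support_takeUntil_subset _ _ hw)⟩

lemma reach_endpoint_not_mem {S : Finset V} {a x : V} (h : Reach G S a x) : x ∉ S := by
  obtain ⟨p, hp⟩ := h
  exact hp x p.end_mem_support

lemma sep_min_neighbor [DecidableEq V] {S : Finset V} {a b : V}
    (hsep : Sep G S a b) (hmin : ∀ S' : Finset V, Sep G S' a b → S.card ≤ S'.card)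
    {x : V} (hx : x ∈ S) : ∃ y, G.Adj x y ∧ Reach G S a y := by
  have h1 : ¬ Sep G (S.erase x) a b := by
    intro hs
    have h2 := hmin _ hs
    have h3 := Finset.card_erase_lt_of_mem hx
    omega
  have ha : a ∉ S.erase x := fun h => hsep.1 (Finset.mem_of_mem_erase h)
  have hb : b ∉ S.erase x := fun h => hsep.2.1 (Finset.mem_of_mem_erase h)
  rw [Sep] at h1
  push_neg at h1
  obtain ⟨p, hp⟩ := h1 ha hb
  obtain ⟨z, hzS, hzp⟩ := hsep.2.2 p
  have hzx : z = x := by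
    by_contra h
    exact hp z (Finset.mem_erase.mpr ⟨h, hzS⟩) hzp
  subst hzx
  set q := p.takeUntil z hzp with hqdef
  have hxa : z ≠ a := fun h => hsep.1 (h ▸ hx)
  have hqnn : ¬ q.reverse.Nil := SimpleGraph.Walk.not_nil_of_ne hxa
  obtain ⟨y, hadj, r, hr⟩ := SimpleGraph.Walk.not_nil_iff.mp hqnn
  have hcount : q.support.count z = 1 := p.count_support_takeUntil_eq_one hzp
  have hsup : q.support = (SimpleGraph.Walk.cons hadj r).support.reverse := by
    rw [← hr, SimpleGraph.Walk.support_reverse, List.reverse_reverse]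
  have hxr : z ∉ r.support := by
    intro hmem
    rw [hsup, SimpleGraph.Walk.support_cons, List.count_reverse, List.count_cons_self] at hcount
    have : 0 < r.support.count z := List.count_pos_iff.mpr hmem
    omega
  refine ⟨y, hadj, r.reverse, ?_⟩
  intro w hw hwS
  rw [SimpleGraph.Walk.support_reverse, List.mem_reverse] at hw
  have hwq : w ∈ q.support := by
    rw [hsup, SimpleGraph.Walk.support_cons, List.mem_reverse]
    exact List.mem_cons_of_mem _ hw
  have hwp : w ∈ p.support := SimpleGraph.Walk.support_takeUntil_subset _ _ hwq
  by_cases hwz : w = z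
  · exact hxr (hwz ▸ hw)
  · exact hp w (Finset.mem_erase.mpr ⟨hwz, hwS⟩) hwp

/-! ### Minimal walks and no-chord arguments -/

lemma exists_min_walk {x y : V} (P : G.Walk x y → Prop)
    (hmono : ∀ (w₁ w₂ : G.Walk x y), w₂.support ⊆ w₁.support → P w₁ → P w₂)
    (h : ∃ w, P w) :
    ∃ w, P w ∧ w.IsPath ∧ ∀ w', P w' → w.length ≤ w'.length := by
  classical
  have hex : ∃ ℓ, ∃ w : G.Walk x y, P w ∧ w.length = ℓ := by
    obtain ⟨w, hw⟩ := h
    exact ⟨_, w, hw, rfl⟩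
  obtain ⟨w, hw, hlen⟩ := Nat.find_spec hex
  refine ⟨w.bypass, hmono _ _ (SimpleGraph.Walk.support_bypass_subset w) hw,
    SimpleGraph.Walk.bypass_isPath w, ?_⟩
  intro w' hw'
  have h1 : w.bypass.length ≤ w.length := SimpleGraph.Walk.length_bypass_le w
  have h2 : Nat.find hex ≤ w'.length := Nat.find_min' hex ⟨w', hw', rfl⟩
  omega

lemma edge_mem_of_length_one {u v : V} (q : G.Walk u v) (h : q.length = 1) :
    s(u, v) ∈ q.edges := by
  cases q with
  | nil => simp at h
  | cons h' r =>
    have h0 : r.length = 0 := by simpa using h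
    have h2 := r.eq_of_length_eq_zero h0
    subst h2
    simp

lemma shortcut_absurd {x y : V} (P : G.Walk x y → Prop)
    (hmono : ∀ (w₁ w₂ : G.Walk x y), w₂.support ⊆ w₁.support → P w₁ → P w₂)
    (w : G.Walk x y) (hP : P w) (hmin : ∀ w', P w' → w.length ≤ w'.length)
    {u v : V} (hu : u ∈ w.support) (hv : v ∈ w.support)
    (huv : G.Adj u v) (hne : s(u, v) ∉ w.edges) : False := by
  classical
  set t := w.takeUntil u hu with htdef
  set d := w.dropUntil u hu with hddef
  have hspec : t.append d = w := w.take_spec hu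
  have hlen : t.length + d.length = w.length := by
    rw [← hspec, SimpleGraph.Walk.length_append]
  by_cases hvd : v ∈ d.support
  · set d' := d.dropUntil v hvd with hd'def
    set w' := t.append (SimpleGraph.Walk.cons huv d') with hw'def
    have hsub : w'.support ⊆ w.support := by
      intro z hz
      rw [hw'def, SimpleGraph.Walk.mem_support_append_iff] at hz
      rcases hz with hz | hz
      · exact (SimpleGraph.Walk.support_takeUntil_subset w hu) hz
      · rw [SimpleGraph.Walk.support_cons] at hz
        rcases List.mem_cons.mp hz with rfl | hz
        · exact hu
        · exact (SimpleGraph.Walk.support_dropUntil_subset w hu)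
            ((SimpleGraph.Walk.support_dropUntil_subset d hvd) hz)
    have h1 : w'.length = t.length + (d'.length + 1) := by
      rw [hw'def, SimpleGraph.Walk.length_append, SimpleGraph.Walk.length_cons]
    have h2 : (d.takeUntil v hvd).length + d'.length = d.length := by
      rw [hd'def, ← SimpleGraph.Walk.length_append, d.take_spec hvd]
    have h3 : (d.takeUntil v hvd).length ≠ 0 := fun h0 =>
      (G.ne_of_adj huv) (SimpleGraph.Walk.eq_of_length_eq_zero h0)
    have h4 : (d.takeUntil v hvd).length ≠ 1 := by
      intro h1'
      have hmem := edge_mem_of_length_one _ h1'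
      exact hne (SimpleGraph.Walk.edges_dropUntil_subset w hu
        (SimpleGraph.Walk.edges_takeUntil_subset d hvd hmem))
    have h5 := hmin w' (hmono w w' hsub hP)
    omega
  · have hvt : v ∈ t.support := by
      have h6 := hv
      rw [← hspec, SimpleGraph.Walk.mem_support_append_iff] at h6
      tauto
    set t' := t.takeUntil v hvt with ht'def
    set w' := t'.append (SimpleGraph.Walk.cons huv.symm d) with hw'def
    have hsub : w'.support ⊆ w.support := by
      intro z hz
      rw [hw'def, SimpleGraph.Walk.mem_support_append_iff] at hz
      rcases hz with hz | hz
      · exact (SimpleGraph.Walk.support_takeUntil_subset w hu)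
          ((SimpleGraph.Walk.support_takeUntil_subset t hvt) hz)
      · rw [SimpleGraph.Walk.support_cons] at hz
        rcases List.mem_cons.mp hz with rfl | hz
        · exact hv
        · exact (SimpleGraph.Walk.support_dropUntil_subset w hu) hz
    have h1 : w'.length = t'.length + (d.length + 1) := by
      rw [hw'def, SimpleGraph.Walk.length_append, SimpleGraph.Walk.length_cons]
    have h2 : t'.length + (t.dropUntil v hvt).length = t.length := by
      rw [ht'def, ← SimpleGraph.Walk.length_append, t.take_spec hvt]
    have h3 : (t.dropUntil v hvt).length ≠ 0 := fun h0 =>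
      (G.ne_of_adj huv) (SimpleGraph.Walk.eq_of_length_eq_zero h0).symm
    have h4 : (t.dropUntil v hvt).length ≠ 1 := by
      intro h1'
      have hmem := edge_mem_of_length_one _ h1'
      rw [Sym2.eq_swap] at hmem
      exact hne (SimpleGraph.Walk.edges_takeUntil_subset w hu
        (SimpleGraph.Walk.edges_dropUntil_subset t hvt hmem))
    have h5 := hmin w' (hmono w w' hsub hP)
    omega

/-! ### Minimal separators are cliques -/

lemma sep_clique [DecidableEq V] (hch : IsChordal G) {a b : V} (hab : a ≠ b)
    (hnadj : ¬G.Adj a b) {S : Finset V} (hsep : Sep G S a b)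
    (hmin : ∀ S' : Finset V, Sep G S' a b → S.card ≤ S'.card) :
    ∀ x ∈ S, ∀ y ∈ S, x ≠ y → G.Adj x y := by
  intro x hx y hy hxy
  by_contra hadjxy
  -- the two "one-sided" walk properties
  set PA : G.Walk x y → Prop :=
    fun w => ∀ z ∈ w.support, z = x ∨ z = y ∨ (Reach G S a z ∧ z ∉ S) with hPAdef
  set PB : G.Walk x y → Prop :=
    fun w => ∀ z ∈ w.support, z = x ∨ z = y ∨ (Reach G S b z ∧ z ∉ S) with hPBdef
  have hmonoA : ∀ (w₁ w₂ : G.Walk x y), w₂.support ⊆ w₁.support → PA w₁ → PA w₂ :=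
    fun w₁ w₂ hsub h z hz => h z (hsub hz)
  have hmonoB : ∀ (w₁ w₂ : G.Walk x y), w₂.support ⊆ w₁.support → PB w₁ → PB w₂ :=
    fun w₁ w₂ hsub h z hz => h z (hsub hz)
  -- existence of one-sided walks
  have hexA : ∀ (r : V), (∀ s' ∈ S, ∃ u, G.Adj s' u ∧ Reach G S r u) →
      ∃ w : G.Walk x y, ∀ z ∈ w.support, z = x ∨ z = y ∨ (Reach G S r z ∧ z ∉ S) := by
    intro r hnb
    obtain ⟨u, hxu, hru⟩ := hnb x hx
    obtain ⟨u', hyu', hru'⟩ := hnb y hy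
    obtain ⟨pu, hpu⟩ := hru
    obtain ⟨pu', hpu'⟩ := hru'
    refine ⟨SimpleGraph.Walk.cons hxu ((pu.reverse.append pu').concat hyu'.symm), ?_⟩
    intro z hz
    rw [SimpleGraph.Walk.support_cons] at hz
    rcases List.mem_cons.mp hz with rfl | hz
    · exact Or.inl rfl
    · rw [SimpleGraph.Walk.support_concat, List.mem_append] at hz
      rcases hz with hz | hz
      · rw [SimpleGraph.Walk.mem_support_append_iff] at hz
        rcases hz with hz | hz
        · rw [SimpleGraph.Walk.support_reverse, List.mem_reverse] at hz
          exact Or.inr (Or.inr ⟨reach_of_mem_support pu hpu hz, hpu z hz⟩)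
        · exact Or.inr (Or.inr ⟨reach_of_mem_support pu' hpu' hz, hpu' z hz⟩)
      · simp at hz
        exact Or.inr (Or.inl hz)
  have hnbA : ∀ s' ∈ S, ∃ u, G.Adj s' u ∧ Reach G S a u :=
    fun s' hs' => sep_min_neighbor hsep hmin hs'
  have hnbB : ∀ s' ∈ S, ∃ u, G.Adj s' u ∧ Reach G S b u := by
    intro s' hs'
    have hminb : ∀ S' : Finset V, Sep G S' b a → S.card ≤ S'.card :=
      fun S' h => hmin S' h.symm
    exact sep_min_neighbor hsep.symm hminb hs'
  obtain ⟨wA, hPA, hpathA, hminA⟩ := exists_min_walk PA hmonoA (hexA a hnbA)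
  obtain ⟨wB, hPB, hpathB, hminB⟩ := exists_min_walk PB hmonoB (hexA b hnbB)
  -- lengths
  have hlenA : 2 ≤ wA.length := by
    have h1 : wA.length ≠ 0 := fun h => hxy (SimpleGraph.Walk.eq_of_length_eq_zero h)
    have h2 : wA.length ≠ 1 := fun h =>
      hadjxy (wA.adj_of_mem_edges (edge_mem_of_length_one _ h))
    omega
  have hlenB : 2 ≤ wB.length := by
    have h1 : wB.length ≠ 0 := fun h => hxy (SimpleGraph.Walk.eq_of_length_eq_zero h)
    have h2 : wB.length ≠ 1 := fun h =>
      hadjxy (wB.adj_of_mem_edges (edge_mem_of_length_one _ h))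
    omega
  -- shared membership forces x or y
  have hAB : ∀ z, z ∈ wA.support → z ∈ wB.support → z = x ∨ z = y := by
    intro z hzA hzB
    rcases hPA z hzA with rfl | rfl | ⟨hra, hzs⟩
    · exact Or.inl rfl
    · exact Or.inr rfl
    rcases hPB z hzB with rfl | rfl | ⟨hrb, _⟩
    · exact Or.inl rfl
    · exact Or.inr rfl
    exact absurd (reach_not_both hsep z hra hrb) not_false
  -- the cycle
  set c : G.Walk x x := wA.append wB.reverse with hcdef
  have hclen : c.length = wA.length + wB.length := by
    rw [hcdef, SimpleGraph.Walk.length_append, SimpleGraph.Walk.length_reverse]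
  have hmemc : ∀ z ∈ c.support, z ∈ wA.support ∨ z ∈ wB.support := by
    intro z hz
    rw [hcdef, SimpleGraph.Walk.mem_support_append_iff] at hz
    rcases hz with hz | hz
    · exact Or.inl hz
    · rw [SimpleGraph.Walk.support_reverse, List.mem_reverse] at hz
      exact Or.inr hz
  have heA : ∀ e ∈ wA.edges, e ∈ c.edges := by
    intro e he
    rw [hcdef, SimpleGraph.Walk.edges_append, List.mem_append]
    exact Or.inl he
  have heB : ∀ e ∈ wB.edges, e ∈ c.edges := by
    intro e he
    rw [hcdef, SimpleGraph.Walk.edges_append, List.mem_append,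
      SimpleGraph.Walk.edges_reverse, List.mem_reverse]
    exact Or.inr he
  have hcyc : c.IsCycle := by
    rw [SimpleGraph.Walk.isCycle_def]
    refine ⟨⟨?_⟩, ?_, ?_⟩
    · -- edges nodup
      rw [hcdef, SimpleGraph.Walk.edges_append, SimpleGraph.Walk.edges_reverse]
      rw [List.nodup_append]
      refine ⟨hpathA.isTrail.edges_nodup, List.nodup_reverse.mpr hpathB.isTrail.edges_nodup, ?_⟩
      rintro e heA' _ heB' rfl
      rw [List.mem_reverse] at heB'
      induction e with
      | h u v =>
        have huA : u ∈ wA.support := wA.fst_mem_support_of_mem_edges heA'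
        have hvA : v ∈ wA.support := wA.snd_mem_support_of_mem_edges heA'
        have huB : u ∈ wB.support := wB.fst_mem_support_of_mem_edges heB'
        have hvB : v ∈ wB.support := wB.snd_mem_support_of_mem_edges heB'
        have huv : G.Adj u v := wA.adj_of_mem_edges heA'
        rcases hAB u huA huB with rfl | rfl <;> rcases hAB v hvA hvB with rfl | rfl
        · exact G.irrefl huv
        · exact hadjxy huv
        · exact hadjxy huv.symm
        · exact G.irrefl huv
    · -- not nil
      intro hnil
      have : c.length = 0 := by rw [hnil]; rfl
      omega
    · -- support tail nodup
      have htail : c.support.tail = wA.support.tail ++ wB.reverse.support.tail := by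
        rw [hcdef, SimpleGraph.Walk.support_append]
        rw [SimpleGraph.Walk.support_eq_cons wA]
        simp
      rw [htail, List.nodup_append]
      have hnA : wA.support.Nodup := hpathA.support_nodup
      have hnB : wB.reverse.support.Nodup := by
        rw [SimpleGraph.Walk.support_reverse]
        exact List.nodup_reverse.mpr hpathB.support_nodup
      refine ⟨?_, ?_, ?_⟩
      · rw [SimpleGraph.Walk.support_eq_cons wA] at hnA
        exact hnA.of_cons
      · rw [SimpleGraph.Walk.support_eq_cons wB.reverse] at hnB
        exact hnB.of_cons
      · rintro z hz1 _ hz2 rfl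
        have hzx : z ≠ x := by
          intro h
          rw [SimpleGraph.Walk.support_eq_cons wA] at hnA
          rw [List.nodup_cons] at hnA
          exact hnA.1 (h ▸ hz1)
        have hzy : z ≠ y := by
          intro h
          rw [SimpleGraph.Walk.support_eq_cons wB.reverse] at hnB
          rw [List.nodup_cons] at hnB
          exact hnB.1 (h ▸ hz2)
        have hzA : z ∈ wA.support := List.mem_of_mem_tail hz1
        have hzB : z ∈ wB.support := by
          have : z ∈ wB.reverse.support := List.mem_of_mem_tail hz2
          rwa [SimpleGraph.Walk.support_reverse, List.mem_reverse] at this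
        rcases hAB z hzA hzB with h | h
        · exact hzx h
        · exact hzy h
  -- apply chordality
  obtain ⟨p, q, hps, hqs, hpq, hpqe⟩ := hch x c hcyc (by omega)
  have hcaseA : p ∈ wA.support → q ∈ wA.support → False := by
    intro hp hq
    exact shortcut_absurd PA hmonoA wA hPA hminA hp hq hpq (fun h => hpqe (heA _ h))
  have hcaseB : p ∈ wB.support → q ∈ wB.support → False := by
    intro hp hq
    exact shortcut_absurd PB hmonoB wB hPB hminB hp hq hpq (fun h => hpqe (heB _ h))
  rcases hmemc p hps with hpA | hpB <;> rcases hmemc q hqs with hqA | hqB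
  · exact hcaseA hpA hqA
  · -- p in A, q in B
    by_cases hqA2 : q ∈ wA.support
    · exact hcaseA hpA hqA2
    by_cases hpB2 : p ∈ wB.support
    · exact hcaseB hpB2 hqB
    -- strictly internal on both sides
    have hpint : Reach G S a p ∧ p ∉ S := by
      rcases hPA p hpA with rfl | rfl | h
      · exact absurd wB.start_mem_support hpB2
      · exact absurd wB.end_mem_support hpB2
      · exact h
    have hqint : Reach G S b q ∧ q ∉ S := by
      rcases hPB q hqB with rfl | rfl | h
      · exact absurd wA.start_mem_support hqA2
      · exact absurd wA.end_mem_support hqA2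
      · exact h
    exact reach_not_both hsep q (reach_extend hpint.1 hpq hqint.2) hqint.1
  · -- p in B, q in A (symmetric)
    by_cases hpA2 : p ∈ wA.support
    · exact hcaseA hpA2 hqA
    by_cases hqB2 : q ∈ wB.support
    · exact hcaseB hpB hqB2
    have hqint : Reach G S a q ∧ q ∉ S := by
      rcases hPA q hqA with rfl | rfl | h
      · exact absurd wB.start_mem_support hqB2
      · exact absurd wB.end_mem_support hqB2
      · exact h
    have hpint : Reach G S b p ∧ p ∉ S := by
      rcases hPB p hpB with rfl | rfl | h
      · exact absurd wA.start_mem_support hpA2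
      · exact absurd wA.end_mem_support hpA2
      · exact h
    exact reach_not_both hsep p (reach_extend hqint.1 hpq.symm hpint.2) hpint.1
  · exact hcaseB hpB hqB

/-! ### Dirac's theorem: existence of simplicial vertices -/

lemma dirac : ∀ (N : ℕ) (V : Type u) [Fintype V] [DecidableEq V] (G : SimpleGraph V),
    Fintype.card V ≤ N → IsChordal G →
    (∃ a b : V, a ≠ b ∧ ¬G.Adj a b) →
    ∃ u w : V, IsSimplicial G u ∧ IsSimplicial G w ∧ u ≠ w ∧ ¬G.Adj u w := by
  intro N
  induction N with
  | zero =>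
    intro V _ _ G hcard _ h
    obtain ⟨a, _, _, _⟩ := h
    have : 0 < Fintype.card V := Fintype.card_pos_iff.mpr ⟨a⟩
    omega
  | succ N ih =>
    intro V _ _ G hcard hch h
    obtain ⟨a, b, hab, hnadj⟩ := h
    classical
    -- a separator exists
    have hS0 : Sep G (Finset.univ \ {a, b}) a b := by
      refine ⟨by simp, by simp, ?_⟩
      intro p
      cases p with
      | nil => exact absurd rfl hab
      | @cons _ c _ hadj q =>
        refine ⟨c, ?_, ?_⟩
        · simp only [Finset.mem_sdiff, Finset.mem_univ, true_and, Finset.mem_insert,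
            Finset.mem_singleton, not_or]
          exact ⟨fun hc => G.irrefl (hc ▸ hadj), fun hc => hnadj (hc ▸ hadj)⟩
        · rw [SimpleGraph.Walk.support_cons]
          exact List.mem_cons_of_mem _ q.start_mem_support
    -- minimal separator
    obtain ⟨S, hSmem, hSmin⟩ := Finset.exists_min_image
      (Finset.univ.filter (fun S => Sep G S a b)) Finset.card
      ⟨_, Finset.mem_filter.mpr ⟨Finset.mem_univ _, hS0⟩⟩
    have hsep : Sep G S a b := (Finset.mem_filter.mp hSmem).2
    have hmin : ∀ S', Sep G S' a b → S.card ≤ S'.card :=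
      fun S' h => hSmin S' (Finset.mem_filter.mpr ⟨Finset.mem_univ _, h⟩)
    have hclqS := sep_clique hch hab hnadj hsep hmin
    -- one-sided simplicial vertices
    have side : ∀ (r s : V), r ≠ s → ¬G.Adj r s → Sep G S r s →
        ∃ u : V, IsSimplicial G u ∧ Reach G S r u := by
      intro r s hrs hnadj' hsep'
      set WA : Set V := {x | Reach G S r x ∨ x ∈ S} with hWAdef
      haveI : Fintype ↥WA := Fintype.ofFinite _
      have hsW : s ∉ WA := by
        rintro (hre | hins)
        · obtain ⟨p, hp⟩ := hre
          obtain ⟨z, hzS, hzp⟩ := hsep'.2.2 p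
          exact hp z hzp hzS
        · exact hsep'.2.1 hins
      have hcardW : Fintype.card ↥WA ≤ N := by
        have h1 : Fintype.card ↥WA < Fintype.card V :=
          Fintype.card_lt_of_injective_of_notMem Subtype.val Subtype.val_injective
            (b := s) (by rintro ⟨⟨x, hx⟩, rfl⟩; exact hsW hx)
        omega
      have hchW : IsChordal (G.induce WA) := isChordal_induce hch WA
      have key : ∃ u : ↥WA, IsSimplicial (G.induce WA) u ∧ (u : V) ∉ S := by
        by_cases hcomp : ∀ p q : ↥WA, p ≠ q → (G.induce WA).Adj p q
        · have hrA : Reach G S r r := reach_self hsep'.1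
          exact ⟨⟨r, Or.inl hrA⟩, fun p q _ _ hpq => hcomp p q hpq,
            reach_endpoint_not_mem hrA⟩
        · push_neg at hcomp
          obtain ⟨p, q, hpq, hnadjpq⟩ := hcomp
          obtain ⟨u, w, hu, hw, huw, hnuw⟩ :=
            ih ↥WA (G.induce WA) hcardW hchW ⟨p, q, hpq, hnadjpq⟩
          by_cases huS : (u : V) ∈ S
          · by_cases hwS : (w : V) ∈ S
            · have hadjuw : G.Adj ↑u ↑w :=
                hclqS _ huS _ hwS (fun h => huw (Subtype.ext h))
              exact absurd hadjuw hnuw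
            · exact ⟨w, hw, hwS⟩
          · exact ⟨u, hu, huS⟩
      obtain ⟨u, husimp, huS⟩ := key
      have hureach : Reach G S r u := by
        rcases u.2 with h | h
        · exact h
        · exact absurd h huS
      refine ⟨u, ?_, hureach⟩
      intro p q hup huq hpq
      have hpW : p ∈ WA := by
        by_cases hpS : p ∈ S
        · exact Or.inr hpS
        · exact Or.inl (reach_extend hureach hup hpS)
      have hqW : q ∈ WA := by
        by_cases hqS : q ∈ S
        · exact Or.inr hqS
        · exact Or.inl (reach_extend hureach huq hqS)
      exact husimp ⟨p, hpW⟩ ⟨q, hqW⟩ hup huq (fun h => hpq (congrArg Subtype.val h))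
    obtain ⟨u, hu, hru⟩ := side a b hab hnadj hsep
    obtain ⟨w, hw, hrw⟩ := side b a hab.symm (fun h => hnadj h.symm) hsep.symm
    refine ⟨u, w, hu, hw, ?_, ?_⟩
    · rintro rfl
      exact reach_not_both hsep u hru hrw
    · intro hadj
      have hwS : w ∉ S := reach_endpoint_not_mem hrw
      exact reach_not_both hsep w (reach_extend hru hadj hwS) hrw

lemma exists_simplicial [Fintype V] [DecidableEq V] [Nonempty V] (hch : IsChordal G) :
    ∃ v, IsSimplicial G v := by
  classical
  by_cases hcomp : ∀ a b : V, a ≠ b → G.Adj a b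
  · exact ⟨Classical.arbitrary V, fun a b _ _ h => hcomp a b h⟩
  · push_neg at hcomp
    obtain ⟨a, b, hab, hnadj⟩ := hcomp
    obtain ⟨u, _, hu, _⟩ := dirac (Fintype.card V) V G le_rfl hch ⟨a, b, hab, hnadj⟩
    exact ⟨u, hu⟩

/-! ### Adding a leaf to a tree -/

def addLeaf {n : ℕ} (t : SimpleGraph (Fin n)) (i₀ : Fin n) : SimpleGraph (Fin (n+1)) where
  Adj i j := (∃ (hi : (i : ℕ) < n) (hj : (j : ℕ) < n), t.Adj ⟨i, hi⟩ ⟨j, hj⟩) ∨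
    (i = Fin.last n ∧ j = i₀.castSucc) ∨ (j = Fin.last n ∧ i = i₀.castSucc)
  symm := by
    constructor
    rintro i j (⟨hi, hj, h⟩ | ⟨h1, h2⟩ | ⟨h1, h2⟩)
    · exact Or.inl ⟨hj, hi, h.symm⟩
    · exact Or.inr (Or.inr ⟨h1, h2⟩)
    · exact Or.inr (Or.inl ⟨h1, h2⟩)
  loopless := by
    constructor
    rintro i (⟨hi, hj, h⟩ | ⟨rfl, h2⟩ | ⟨rfl, h2⟩)
    · exact t.irrefl h
    · exact absurd h2.symm (Fin.castSucc_lt_last i₀).ne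
    · exact absurd h2.symm (Fin.castSucc_lt_last i₀).ne

lemma addLeaf_adj_castSucc {n : ℕ} (t : SimpleGraph (Fin n)) (i₀ p q : Fin n) :
    (addLeaf t i₀).Adj p.castSucc q.castSucc ↔ t.Adj p q := by
  constructor
  · rintro (⟨hi, hj, h⟩ | ⟨h1, _⟩ | ⟨h1, _⟩)
    · have e1 : (⟨((p.castSucc : Fin (n+1)) : ℕ), hi⟩ : Fin n) = p := Fin.ext (by simp)
      have e2 : (⟨((q.castSucc : Fin (n+1)) : ℕ), hj⟩ : Fin n) = q := Fin.ext (by simp)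
      rwa [e1, e2] at h
    · exact absurd h1 (Fin.castSucc_lt_last p).ne
    · exact absurd h1 (Fin.castSucc_lt_last q).ne
  · intro h
    refine Or.inl ⟨by simp, by simp, ?_⟩
    have e1 : (⟨((p.castSucc : Fin (n+1)) : ℕ), by simp⟩ : Fin n) = p := Fin.ext (by simp)
    have e2 : (⟨((q.castSucc : Fin (n+1)) : ℕ), by simp⟩ : Fin n) = q := Fin.ext (by simp)
    rwa [e1, e2]

lemma addLeaf_adj_last {n : ℕ} (t : SimpleGraph (Fin n)) (i₀ : Fin n) (j : Fin (n+1)) :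
    (addLeaf t i₀).Adj (Fin.last n) j ↔ j = i₀.castSucc := by
  constructor
  · rintro (⟨hi, _, _⟩ | ⟨_, h2⟩ | ⟨h1, h2⟩)
    · simp at hi
    · exact h2
    · exact absurd h2.symm (Fin.castSucc_lt_last i₀).ne
  · rintro rfl
    exact Or.inr (Or.inl ⟨rfl, rfl⟩)

lemma addLeaf_isTree {n : ℕ} {t : SimpleGraph (Fin n)} (ht : t.IsTree) (i₀ : Fin n) :
    (addLeaf t i₀).IsTree := by
  constructor
  · -- connected
    have hreach : ∀ j : Fin (n+1), (addLeaf t i₀).Reachable j (i₀.castSucc) := by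
      intro j
      induction j using Fin.lastCases with
      | last => exact ((addLeaf_adj_last t i₀ _).mpr rfl).reachable
      | cast j =>
        have hr : t.Reachable j i₀ := ht.isConnected.preconnected j i₀
        exact hr.map ⟨Fin.castSucc, fun h => (addLeaf_adj_castSucc t i₀ _ _).mpr h⟩
    rw [SimpleGraph.connected_iff]
    exact ⟨fun j j' => (hreach j).trans (hreach j').symm, ⟨i₀.castSucc⟩⟩
  · -- acyclic
    intro v c hc
    classical
    by_cases hlast : Fin.last n ∈ c.support
    · have hc' := hc.rotate hlast
      set c' := c.rotate _ hlast with hc'def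
      have hnn : ¬ c'.Nil := hc'.not_nil
      obtain ⟨z, hadj, q, hq⟩ := SimpleGraph.Walk.not_nil_iff.mp hnn
      have hz : z = i₀.castSucc := (addLeaf_adj_last t i₀ _).mp hadj
      subst hz
      have hz2 : ¬ q.reverse.Nil :=
        SimpleGraph.Walk.not_nil_of_ne (Fin.castSucc_lt_last i₀).ne'
      obtain ⟨z', hadj', r, hr⟩ := SimpleGraph.Walk.not_nil_iff.mp hz2
      have hz' : z' = i₀.castSucc := (addLeaf_adj_last t i₀ _).mp hadj'
      subst hz'
      have he : s(Fin.last n, i₀.castSucc) ∈ q.edges := by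
        have hmem : s(Fin.last n, i₀.castSucc) ∈ q.reverse.edges := by
          rw [hr, SimpleGraph.Walk.edges_cons]
          exact List.mem_cons_self
        rwa [SimpleGraph.Walk.edges_reverse, List.mem_reverse] at hmem
      have hnodup := hc'.edges_nodup
      rw [hq, SimpleGraph.Walk.edges_cons, List.nodup_cons] at hnodup
      exact hnodup.1 he
    · -- last not on c; transfer to t
      set s : Set (Fin (n+1)) := {i | (i : ℕ) < n} with hsdef
      have hsub : ∀ z ∈ c.support, z ∈ s := by
        intro z hz
        have hne : z ≠ Fin.last n := fun h => hlast (h ▸ hz)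
        have h1 : (z : ℕ) < n + 1 := z.isLt
        have h2 : (z : ℕ) ≠ n := fun h => hne (Fin.ext (by simp [h]))
        simp only [hsdef, Set.mem_setOf_eq]
        omega
      have hcyc2 : (toInduce c hsub).IsCycle := by
        have hmap := toInduce_map c hsub
        rw [← hmap] at hc
        exact (SimpleGraph.Walk.map_isCycle_iff_of_injective
          (Subtype.val_injective : Function.Injective
            (((SimpleGraph.Embedding.induce s).toHom : _ → Fin (n+1))))).mp hc
      let e : ((addLeaf t i₀).induce s) ≃g t :=
        { toFun := fun x => ⟨(x : Fin (n+1)), x.2⟩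
          invFun := fun p => ⟨p.castSucc, by simp [hsdef]⟩
          left_inv := fun x => Subtype.ext (Fin.ext (by simp))
          right_inv := fun p => Fin.ext (by simp)
          map_rel_iff' := by
            intro x y
            have e1 : ((⟨(x : Fin (n+1)), x.2⟩ : Fin n)).castSucc = (x : Fin (n+1)) :=
              Fin.ext (by simp)
            have e2 : ((⟨(y : Fin (n+1)), y.2⟩ : Fin n)).castSucc = (y : Fin (n+1)) :=
              Fin.ext (by simp)
            constructor
            · intro h
              show (addLeaf t i₀).Adj (x : Fin (n+1)) (y : Fin (n+1))
              rw [← e1, ← e2]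
              exact (addLeaf_adj_castSucc t i₀ _ _).mpr h
            · intro h
              have h2 : (addLeaf t i₀).Adj (x : Fin (n+1)) (y : Fin (n+1)) := h
              rw [← e1, ← e2] at h2
              exact (addLeaf_adj_castSucc t i₀ _ _).mp h2 }
      have hcyc3 : ((toInduce c hsub).map e.toHom).IsCycle :=
        hcyc2.map e.toEquiv.injective
      exact ht.IsAcyclic _ hcyc3

/-! ### The tree-decomposition construction -/

lemma tw_empty (k : ℕ) (V : Type u) [Fintype V] [DecidableEq V] (hV : IsEmpty V)
    (H : SimpleGraph V) :
    ∃ (n : ℕ) (t : SimpleGraph (Fin n)) (B : Fin n → Finset V),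
      t.IsTree ∧
      (∀ v : V, (t.induce {i : Fin n | v ∈ B i}).Connected) ∧
      (∀ i, (B i).card ≤ k + 1) ∧
      (∀ s : Finset V, H.IsClique ↑s → ∃ i, s ⊆ B i) := by
  refine ⟨1, ⊥, fun _ => ∅, ?_, ?_, ?_, ?_⟩
  · constructor
    · rw [SimpleGraph.connected_iff]
      refine ⟨fun a b => ?_, ⟨0⟩⟩
      rw [Subsingleton.elim a b]
    · exact SimpleGraph.isAcyclic_bot
  · intro v
    exact (hV.false v).elim
  · intro i
    simp
  · intro s _
    refine ⟨0, fun x hx => (hV.false x).elim⟩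

lemma tw_aux (k : ℕ) : ∀ (N : ℕ) (V : Type u) [Fintype V] [DecidableEq V]
    (H : SimpleGraph V),
    Fintype.card V ≤ N → IsChordal H →
    (∀ s : Finset V, H.IsClique ↑s → s.card ≤ k + 1) →
    ∃ (n : ℕ) (t : SimpleGraph (Fin n)) (B : Fin n → Finset V),
      t.IsTree ∧
      (∀ v : V, (t.induce {i : Fin n | v ∈ B i}).Connected) ∧
      (∀ i, (B i).card ≤ k + 1) ∧
      (∀ s : Finset V, H.IsClique ↑s → ∃ i, s ⊆ B i) := by
  intro N
  induction N with
  | zero =>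
    intro V _ _ H hcard _ _
    have hV : IsEmpty V := Fintype.card_eq_zero_iff.mp (Nat.le_zero.mp hcard)
    exact tw_empty k V hV H
  | succ N ih =>
    intro V _ _ H hcard hch hclq
    classical
    cases isEmpty_or_nonempty V with
    | inl hV => exact tw_empty k V hV H
    | inr hne =>
      obtain ⟨v, hv⟩ := exists_simplicial (G := H) hch
      set Vs : Set V := {w | w ≠ v} with hVsdef
      set H' := H.induce Vs with hH'def
      have hcard' : Fintype.card ↥Vs ≤ N := by
        have h1 : Fintype.card ↥Vs < Fintype.card V :=
          Fintype.card_lt_of_injective_of_notMem Subtype.val Subtype.val_injective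
            (b := v) (by rintro ⟨⟨x, hx⟩, h⟩; exact hx h)
        omega
      have hch' : IsChordal H' := isChordal_induce hch Vs
      have hclq' : ∀ s : Finset ↥Vs, H'.IsClique ↑s → s.card ≤ k + 1 := by
        intro s hs
        have hclqV : H.IsClique ↑(s.image Subtype.val) := by
          intro x hx y hy hxy
          rw [Finset.coe_image] at hx hy
          obtain ⟨x', hx', rfl⟩ := hx
          obtain ⟨y', hy', rfl⟩ := hy
          exact hs hx' hy' (fun h => hxy (congrArg Subtype.val h))
        have h2 := hclq _ hclqV
        rwa [Finset.card_image_of_injective _ Subtype.val_injective] at h2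
      obtain ⟨n, t, B', htree, hconn', hcard'', hbag'⟩ := ih ↥Vs H' hcard' hch' hclq'
      -- neighborhood of v
      set NS : Finset V := Finset.univ.filter (fun x => H.Adj v x) with hNSdef
      have hNSmem : ∀ x, x ∈ NS ↔ H.Adj v x := by
        intro x
        simp [hNSdef]
      set NS' : Finset ↥Vs := NS.subtype (fun x => x ∈ Vs) with hNS'def
      have hNS'mem : ∀ u : ↥Vs, u ∈ NS' ↔ H.Adj v ↑u := by
        intro u
        rw [hNS'def, Finset.mem_subtype, hNSmem]
      have hNS'clq : H'.IsClique ↑NS' := by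
        intro x hx y hy hxy
        rw [Finset.mem_coe, hNS'mem] at hx hy
        exact hv _ _ hx hy (fun h => hxy (Subtype.ext h))
      obtain ⟨i₀, hi₀⟩ := hbag' NS' hNS'clq
      -- new decomposition
      set t₂ := addLeaf t i₀ with ht₂def
      set B : Fin (n+1) → Finset V :=
        fun i => Fin.lastCases (insert v NS) (fun j => (B' j).image Subtype.val) i with hBdef
      have hBcast : ∀ j : Fin n, B j.castSucc = (B' j).image Subtype.val := by
        intro j
        simp [hBdef]
      have hBlast : B (Fin.last n) = insert v NS := by
        simp [hBdef]
      have hvnot : ∀ j : Fin n, v ∉ B j.castSucc := by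
        intro j hmem
        rw [hBcast] at hmem
        obtain ⟨u, _, hu⟩ := Finset.mem_image.mp hmem
        exact u.2 hu
      have hmemcast : ∀ (w : V) (hw : w ≠ v) (j : Fin n),
          w ∈ B j.castSucc ↔ (⟨w, hw⟩ : ↥Vs) ∈ B' j := by
        intro w hw j
        rw [hBcast, Finset.mem_image]
        constructor
        · rintro ⟨u, hu, rfl⟩
          have he : (⟨(u : V), hw⟩ : ↥Vs) = u := Subtype.ext rfl
          rw [he]
          exact hu
        · intro h
          exact ⟨_, h, rfl⟩
      have hnewclq : H.IsClique ↑(insert v NS) := by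
        intro x hx y hy hxy
        rw [Finset.coe_insert, Set.mem_insert_iff] at hx hy
        rcases hx with rfl | hx <;> rcases hy with rfl | hy
        · exact absurd rfl hxy
        · exact (hNSmem y).mp hy
        · exact ((hNSmem x).mp hx).symm
        · exact hv x y ((hNSmem x).mp hx) ((hNSmem y).mp hy) hxy
      refine ⟨n + 1, t₂, B, addLeaf_isTree htree i₀, ?_, ?_, ?_⟩
      · -- connectivity of the bag sets
        intro w
        by_cases hw : w = v
        · subst hw
          have hset : {i : Fin (n+1) | w ∈ B i} = {Fin.last n} := by
            ext i
            refine Fin.lastCases ?_ (fun j => ?_) i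
            · simp [hBlast]
            · simp only [Set.mem_setOf_eq, Set.mem_singleton_iff]
              exact iff_of_false (hvnot j) (Fin.castSucc_lt_last j).ne
          rw [hset]
          rw [SimpleGraph.connected_iff]
          refine ⟨fun x y => ?_, ⟨⟨Fin.last n, rfl⟩⟩⟩
          have hxy : x = y := Subtype.ext (by rw [x.2, y.2])
          rw [hxy]
        · set w' : ↥Vs := (⟨w, hw⟩ : ↥Vs) with hw'def
          have hmemiff : ∀ j : Fin n, w ∈ B j.castSucc ↔ w' ∈ B' j := hmemcast w hw
          obtain ⟨j₀, hj₀⟩ : ∃ j, w' ∈ B' j := by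
            obtain ⟨j, hj⟩ := hbag' {w'} (by
              rw [Finset.coe_singleton]
              exact SimpleGraph.isClique_singleton _)
            exact ⟨j, hj (Finset.mem_singleton_self w')⟩
          have hkey : ∀ (j₁ : Fin n) (hj₁ : w' ∈ B' j₁) (j : Fin n) (hj : w' ∈ B' j),
              (t₂.induce {i : Fin (n+1) | w ∈ B i}).Reachable
                ⟨j.castSucc, (hmemiff j).mpr hj⟩ ⟨j₁.castSucc, (hmemiff j₁).mpr hj₁⟩ := by
            intro j₁ hj₁ j hj
            have hr : (t.induce {i : Fin n | w' ∈ B' i}).Reachable ⟨j, hj⟩ ⟨j₁, hj₁⟩ :=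
              (hconn' w').preconnected _ _
            exact SimpleGraph.Reachable.map
              (⟨fun x => ⟨(x : Fin n).castSucc, (hmemiff x.1).mpr x.2⟩,
                fun {a b} h => (addLeaf_adj_castSucc t i₀ _ _).mpr h⟩ :
                (t.induce {i : Fin n | w' ∈ B' i}) →g
                  (t₂.induce {i : Fin (n+1) | w ∈ B i})) hr
          by_cases hadj : H.Adj v w
          · have hlastmem : w ∈ B (Fin.last n) := by
              rw [hBlast]
              exact Finset.mem_insert_of_mem ((hNSmem w).mpr hadj)
            have hi₀mem : w' ∈ B' i₀ := hi₀ ((hNS'mem w').mpr hadj)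
            have hall : ∀ (i : Fin (n+1)) (hi : w ∈ B i),
                (t₂.induce {i : Fin (n+1) | w ∈ B i}).Reachable
                  ⟨i, hi⟩ ⟨i₀.castSucc, (hmemiff i₀).mpr hi₀mem⟩ := by
              refine Fin.lastCases ?_ ?_
              · intro hi
                refine SimpleGraph.Adj.reachable ?_
                show t₂.Adj (Fin.last n) (i₀.castSucc)
                exact (addLeaf_adj_last t i₀ _).mpr rfl
              · intro j hi
                exact hkey i₀ hi₀mem j ((hmemiff j).mp hi)
            rw [SimpleGraph.connected_iff]
            refine ⟨fun x y => ?_, ⟨⟨i₀.castSucc, (hmemiff i₀).mpr hi₀mem⟩⟩⟩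
            exact (hall x.1 x.2).trans (hall y.1 y.2).symm
          · have hall : ∀ (i : Fin (n+1)) (hi : w ∈ B i),
                (t₂.induce {i : Fin (n+1) | w ∈ B i}).Reachable
                  ⟨i, hi⟩ ⟨j₀.castSucc, (hmemiff j₀).mpr hj₀⟩ := by
              refine Fin.lastCases ?_ ?_
              · intro hi
                rw [hBlast, Finset.mem_insert] at hi
                rcases hi with rfl | hi
                · exact absurd rfl hw
                · exact absurd ((hNSmem w).mp hi) hadj
              · intro j hi
                exact hkey j₀ hj₀ j ((hmemiff j).mp hi)
            rw [SimpleGraph.connected_iff]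
            refine ⟨fun x y => ?_, ⟨⟨j₀.castSucc, (hmemiff j₀).mpr hj₀⟩⟩⟩
            exact (hall x.1 x.2).trans (hall y.1 y.2).symm
      · -- bag sizes
        intro i
        refine Fin.lastCases ?_ (fun j => ?_) i
        · rw [hBlast]
          exact hclq _ hnewclq
        · rw [hBcast, Finset.card_image_of_injective _ Subtype.val_injective]
          exact hcard'' j
      · -- every clique is inside a bag
        intro s hs
        by_cases hvs : v ∈ s
        · refine ⟨Fin.last n, ?_⟩
          rw [hBlast]
          intro x hx
          by_cases hxv : x = v
          · subst hxv
            exact Finset.mem_insert_self _ _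
          · refine Finset.mem_insert_of_mem ((hNSmem x).mpr ?_)
            exact hs (Finset.mem_coe.mpr hvs) (Finset.mem_coe.mpr hx) (Ne.symm hxv)
        · set s' : Finset ↥Vs := s.subtype (fun x => x ∈ Vs) with hs'def
          have hs'clq : H'.IsClique ↑s' := by
            intro x hx y hy hxy
            rw [Finset.mem_coe, hs'def, Finset.mem_subtype] at hx hy
            exact hs hx hy (fun h => hxy (Subtype.ext h))
          obtain ⟨j, hj⟩ := hbag' s' hs'clq
          refine ⟨j.castSucc, ?_⟩
          intro x hx
          have hxv : x ≠ v := fun h => hvs (h ▸ hx)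
          have hxs' : (⟨x, hxv⟩ : ↥Vs) ∈ s' := by
            rw [hs'def, Finset.mem_subtype]
            exact hx
          exact (hmemcast x hxv j).mpr (hj hxs')

end TWProof

/-- A chordal graph whose maximum clique has size at most `k + 1` has
treewidth at most `k`. -/
theorem stmt10 {V : Type*} [Fintype V] [DecidableEq V]
    (H : SimpleGraph V) (k : ℕ)
    (hchordal : IsChordal H)
    (hclique : ∀ s : Finset V, H.IsClique ↑s → s.card ≤ k + 1) :
    HasTreewidthLE H k := by
  classical
  obtain ⟨n, t, B, htree, hconn, hcard, hclq'⟩ :=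
    TWProof.tw_aux k (Fintype.card V) V H le_rfl hchordal hclique
  refine ⟨n, t, B, htree, ?_, ?_, hconn, hcard⟩
  · intro v
    obtain ⟨i, hi⟩ := hclq' {v} (by
      rw [Finset.coe_singleton]
      exact SimpleGraph.isClique_singleton _)
    exact ⟨i, hi (Finset.mem_singleton_self v)⟩
  · intro u v huv
    obtain ⟨i, hi⟩ := hclq' {u, v} (by
      rw [Finset.coe_insert, Finset.coe_singleton]
      exact SimpleGraph.isClique_pair.mpr (fun _ => huv))
    exact ⟨i, hi (Finset.mem_insert_self _ _),
      hi (Finset.mem_insert_of_mem (Finset.mem_singleton_self v))⟩
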